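/- In the tanh-network setting, for every θ in Θ the gradient estimator is unbiased: for every parameter component θ^k (an entry of some W_i or b_i), the partial derivative ∂/∂θ^k of θ ↦ E_z[f(θ, z)] exists and equals E_z[∂f/∂θ^k(θ, z)]. -/

import Mathlib

open MeasureTheory
open scoped BigOperators

noncomputable section

/-- Parameter space of an `n`-layer fully connected network with layer widths `κ`:
for each layer `i` a weight matrix `W_i ∈ ℝ^{κ(i+1) × κ i}` and a bias `b_i ∈ ℝ^{κ(i+1)}`. -/
abbrev NNParams (κ : ℕ → ℕ) (n : ℕ) :=
  (i : Fin n) → ((Fin (κ (i.1 + 1)) → Fin (κ i.1) → ℝ) × (Fin (κ (i.1 + 1)) → ℝ))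

/-- The layers of the tanh network: `x₀ = z`, `x_{i+1} = tanh(W_{i+1} x_i + b_{i+1})`
entrywise for the hidden layers `i + 1 ≤ n - 1`, and the affine output layer
`x_n = W_n x_{n-1} + b_n` (junk value `0` beyond layer `n`). -/
def tanhNet (κ : ℕ → ℕ) (n : ℕ) (θ : NNParams κ n) (z : Fin (κ 0) → ℝ) :
    (i : ℕ) → Fin (κ i) → ℝ
  | 0 => z
  | (i + 1) =>
    if h : i < n then
      fun j =>
        let pre := (∑ l, (θ ⟨i, h⟩).1 j l * tanhNet κ n θ z i l) + (θ ⟨i, h⟩).2 j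
        if i + 2 ≤ n then Real.tanh pre else pre
    else 0

/-- Squared-error loss `f(θ,z) = ‖x_n(θ,z) − f̂(z)‖²` of the tanh network. -/
def tanhLoss (κ : ℕ → ℕ) (n : ℕ) (fhat : (Fin (κ 0) → ℝ) → (Fin (κ n) → ℝ))
    (θ : NNParams κ n) (z : Fin (κ 0) → ℝ) : ℝ :=
  ∑ j, (tanhNet κ n θ z n j - fhat z j) ^ 2

/-- The standard Gaussian measure on `ℝ^d` (i.i.d. `N(0,1)` coordinates). -/
def stdGaussian (d : ℕ) : Measure (Fin d → ℝ) :=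
  Measure.pi fun _ => ProbabilityTheory.gaussianReal 0 1


/-!
Along a line `θ + t • v` with `|t| < 1` the weights stay bounded, so by induction every layer of
the network and its `t`-derivative are `O(1 + ‖z‖)`: the affine maps grow at most linearly in the
previous layer, while `|tanh| ≤ 1` and `0 < tanh' ≤ 1`. Hence the loss and its `t`-derivative are
dominated by a multiple of `(1 + ‖z‖)² + ‖f̂ z‖²`, which is integrable against the Gaussian, and
differentiation under the integral sign applies.
-/
open Filter Metric

theorem Real.hasDerivAt_tanh (x : ℝ) : HasDerivAt Real.tanh (Real.cosh x ^ 2)⁻¹ x := by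
  have h := (Real.hasDerivAt_sinh x).div (Real.hasDerivAt_cosh x) (Real.cosh_pos x).ne'
  rw [show Real.tanh = Real.sinh / Real.cosh from funext Real.tanh_eq_sinh_div_cosh]
  simpa only [← sq, Real.cosh_sq_sub_sinh_sq, one_div] using h

theorem Real.continuous_tanh : Continuous Real.tanh :=
  continuous_iff_continuousAt.2 fun x => (Real.hasDerivAt_tanh x).continuousAt

section Domination

variable {α : Type*}

def DominatedWithDeriv (w : α → ℝ) (F : ℝ → α → ℝ) : Prop :=
  ∃ C, 0 ≤ C ∧ ∀ z, ∀ t ∈ ball (0 : ℝ) 1,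
    ∃ d, HasDerivAt (F · z) d t ∧ |F t z| ≤ C * w z ∧ |d| ≤ C * w z

namespace DominatedWithDeriv

variable {w w' : α → ℝ} {F G : ℝ → α → ℝ}

lemma mono (hF : DominatedWithDeriv w F) (hw : ∀ z, w z ≤ w' z) : DominatedWithDeriv w' F := by
  obtain ⟨C, hC, hF⟩ := hF
  refine ⟨C, hC, fun z t ht => ?_⟩
  obtain ⟨d, hd, hFz, hdz⟩ := hF z t ht
  have := mul_le_mul_of_nonneg_left (hw z) hC
  exact ⟨d, hd, hFz.trans this, hdz.trans this⟩

lemma of_abs_le {g : α → ℝ} (hg : ∀ z, |g z| ≤ w z) : DominatedWithDeriv w (fun _ z => g z) :=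
  ⟨1, zero_le_one, fun z t _ => ⟨0, hasDerivAt_const t (g z), by simpa using hg z,
    by simpa using (abs_nonneg _).trans (hg z)⟩⟩

lemma affine (a b : ℝ) : DominatedWithDeriv (fun _ : α => 1) (fun t _ => a + t * b) := by
  refine ⟨|a| + |b|, by positivity, fun z t ht => ⟨b, ?_, ?_, ?_⟩⟩
  · simpa using (hasDerivAt_mul_const b).const_add a
  · have ht : |t| ≤ 1 := (mem_ball_zero_iff.1 ht).le
    calc |a + t * b| ≤ |a| + |t| * |b| := (abs_add_le _ _).trans_eq (by rw [abs_mul])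
      _ ≤ (|a| + |b|) * 1 := by nlinarith [abs_nonneg b]
  · simp [abs_nonneg a]

lemma add (hF : DominatedWithDeriv w F) (hG : DominatedWithDeriv w G) :
    DominatedWithDeriv w (fun t z => F t z + G t z) := by
  obtain ⟨C, hC, hF⟩ := hF
  obtain ⟨D, hD, hG⟩ := hG
  refine ⟨C + D, by positivity, fun z t ht => ?_⟩
  obtain ⟨d, hd, hFz, hdz⟩ := hF z t ht
  obtain ⟨e, he, hGz, hez⟩ := hG z t ht
  exact ⟨d + e, hd.add he, (abs_add_le _ _).trans (by linarith),
    (abs_add_le _ _).trans (by linarith)⟩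

lemma sum {ι : Type*} (s : Finset ι) {F : ι → ℝ → α → ℝ}
    (hF : ∀ i ∈ s, DominatedWithDeriv w (F i)) :
    DominatedWithDeriv w (fun t z => ∑ i ∈ s, F i t z) := by
  induction s using Finset.cons_induction with
  | empty =>
    exact ⟨0, le_rfl, fun z t _ => ⟨0, by simpa using hasDerivAt_const t (0 : ℝ), by simp, by simp⟩⟩
  | cons i s _ ih =>
    simp only [Finset.sum_cons]
    exact (hF i (Finset.mem_cons_self i s)).add (ih fun j hj => hF j (Finset.mem_cons_of_mem hj))

lemma mul {a : ℝ → α → ℝ} (ha : DominatedWithDeriv (fun _ => 1) a)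
    (hF : DominatedWithDeriv w F) : DominatedWithDeriv w (fun t z => a t z * F t z) := by
  obtain ⟨C, hC, ha⟩ := ha
  obtain ⟨D, hD, hF⟩ := hF
  refine ⟨2 * C * D, by positivity, fun z t ht => ?_⟩
  obtain ⟨d, hd, haz, hdz⟩ := ha z t ht
  obtain ⟨e, he, hFz, hez⟩ := hF z t ht
  simp only [mul_one] at haz hdz
  have h1 : |a t z| * |F t z| ≤ C * (D * w z) := mul_le_mul haz hFz (abs_nonneg _) hC
  have h2 : |d| * |F t z| ≤ C * (D * w z) := mul_le_mul hdz hFz (abs_nonneg _) hC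
  have h3 : |a t z| * |e| ≤ C * (D * w z) := mul_le_mul haz hez (abs_nonneg _) hC
  have hw : 0 ≤ C * (D * w z) := (mul_nonneg (abs_nonneg _) (abs_nonneg _)).trans h1
  refine ⟨d * F t z + a t z * e, hd.mul he, ?_, ?_⟩
  · rw [abs_mul]; linarith
  · calc |d * F t z + a t z * e| ≤ |d| * |F t z| + |a t z| * |e| := by
          rw [← abs_mul, ← abs_mul]; exact abs_add_le _ _
      _ ≤ 2 * C * D * w z := by linarith

lemma tanh (hF : DominatedWithDeriv w F) (hw : ∀ z, 1 ≤ w z) :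
    DominatedWithDeriv w (fun t z => Real.tanh (F t z)) := by
  obtain ⟨C, hC, hF⟩ := hF
  refine ⟨max C 1, by positivity, fun z t ht => ?_⟩
  obtain ⟨d, hd, -, hdz⟩ := hF z t ht
  have hwz := hw z
  have hsech : |(Real.cosh (F t z) ^ 2)⁻¹| ≤ 1 := by
    rw [abs_inv, abs_of_pos (by positivity)]
    exact inv_le_one_of_one_le₀ (one_le_pow₀ (Real.one_le_cosh _))
  refine ⟨(Real.cosh (F t z) ^ 2)⁻¹ * d, (Real.hasDerivAt_tanh _).comp t hd, ?_, ?_⟩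
  · calc |Real.tanh (F t z)| ≤ 1 := (Real.abs_tanh_lt_one _).le
      _ ≤ max C 1 * w z := by nlinarith [le_max_right C 1]
  · calc |(Real.cosh (F t z) ^ 2)⁻¹ * d| ≤ 1 * (C * w z) := by
          rw [abs_mul]; exact mul_le_mul hsech hdz (abs_nonneg _) zero_le_one
      _ ≤ max C 1 * w z := by nlinarith [le_max_left C 1]

lemma sub_sq (hF : DominatedWithDeriv w F) (g : α → ℝ) :
    DominatedWithDeriv (fun z => w z ^ 2 + g z ^ 2) (fun t z => (F t z - g z) ^ 2) := by
  obtain ⟨C, hC, hF⟩ := hF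
  refine ⟨3 * C ^ 2 + 2, by positivity, fun z t ht => ?_⟩
  obtain ⟨d, hd, hFz, hdz⟩ := hF z t ht
  have hFz' : F t z ^ 2 ≤ (C * w z) ^ 2 := sq_le_sq' (abs_le.1 hFz).1 (abs_le.1 hFz).2
  have hCw : 0 ≤ C * w z := (abs_nonneg _).trans hFz
  have hw2 : 0 ≤ C ^ 2 * w z ^ 2 := by positivity
  refine ⟨2 * (F t z - g z) * d, by simpa using (hd.sub_const (g z)).fun_pow 2, ?_, ?_⟩
  · rw [abs_of_nonneg (sq_nonneg _)]
    nlinarith [sq_nonneg (F t z + g z), sq_nonneg (g z)]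
  · calc |2 * (F t z - g z) * d| ≤ 2 * (|F t z| * |d|) + 2 * (|g z| * |d|) := by
          rw [abs_mul, abs_mul, abs_two]
          nlinarith [abs_sub (F t z) (g z), abs_nonneg d]
      _ ≤ 2 * (C * w z) ^ 2 + (g z ^ 2 + (C * w z) ^ 2) := by
          gcongr
          · exact mul_le_mul hFz hdz (abs_nonneg _) hCw |>.trans_eq (sq _).symm
          · nlinarith [sq_abs (g z), sq_nonneg (|g z| - |d|), abs_nonneg d, abs_nonneg (g z)]
      _ ≤ (3 * C ^ 2 + 2) * (w z ^ 2 + g z ^ 2) := by nlinarith [sq_nonneg (g z)]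

end DominatedWithDeriv

end Domination

section ParametricIntegral

open Topology

variable {α : Type*} [MeasurableSpace α] {μ : Measure α} {F : ℝ → α → ℝ}

theorem aestronglyMeasurable_deriv_apply (hF : ∀ t, AEStronglyMeasurable (F t) μ) (x₀ : ℝ)
    (hd : ∀ z, DifferentiableAt ℝ (F · z) x₀) :
    AEStronglyMeasurable (fun z => deriv (F · z) x₀) μ := by
  have hx : Tendsto (fun m : ℕ => x₀ + ((m : ℝ) + 1)⁻¹) atTop (𝓝[≠] x₀) := by
    refine tendsto_nhdsWithin_of_tendsto_nhds_of_eventually_within _ ?_ (Eventually.of_forall ?_)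
    · simpa using tendsto_one_div_add_atTop_nhds_zero_nat.const_add x₀
    · intro m; simp; positivity
  refine aestronglyMeasurable_of_tendsto_ae atTop
    (f := fun (m : ℕ) z => slope (F · z) x₀ (x₀ + ((m : ℝ) + 1)⁻¹)) (fun m => ?_)
    (ae_of_all _ fun z => ((hasDerivAt_iff_tendsto_slope.1 (hd z).hasDerivAt).comp hx))
  simp only [slope, vsub_eq_sub]
  exact ((hF _).sub (hF x₀)).const_smul (x₀ + ((m : ℝ) + 1)⁻¹ - x₀)⁻¹

theorem DominatedWithDeriv.hasDerivAt_integral {w : α → ℝ} (hF : DominatedWithDeriv w F)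
    (hw : Integrable w μ) (hF_meas : ∀ t, AEStronglyMeasurable (F t) μ) :
    HasDerivAt (fun t => ∫ z, F t z ∂μ) (∫ z, deriv (F · z) 0 ∂μ) 0 := by
  obtain ⟨C, -, hF⟩ := hF
  have hF' : ∀ z, ∀ t ∈ ball (0 : ℝ) 1, HasDerivAt (F · z) (deriv (F · z) t) t ∧
      ‖F t z‖ ≤ C * w z ∧ ‖deriv (F · z) t‖ ≤ C * w z := fun z t ht => by
    obtain ⟨d, hd, hFz, hdz⟩ := hF z t ht
    exact ⟨hd.differentiableAt.hasDerivAt, hFz, hd.deriv ▸ hdz⟩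
  have h0 : (0 : ℝ) ∈ ball (0 : ℝ) 1 := mem_ball_self one_pos
  exact (hasDerivAt_integral_of_dominated_loc_of_deriv_le (ball_mem_nhds 0 one_pos)
    (Eventually.of_forall hF_meas)
    ((hw.const_mul C).mono' (hF_meas 0) (ae_of_all _ fun z => (hF' z 0 h0).2.1))
    (aestronglyMeasurable_deriv_apply hF_meas 0 fun z => (hF' z 0 h0).1.differentiableAt)
    (ae_of_all _ fun z t ht => (hF' z t ht).2.2) (hw.const_mul C)
    (ae_of_all _ fun z t ht => (hF' z t ht).1)).2

end ParametricIntegral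

section TanhNetwork

variable {κ : ℕ → ℕ} {n : ℕ}

lemma tanhNet_succ (θ : NNParams κ n) (z : Fin (κ 0) → ℝ) {i : ℕ} (h : i < n)
    (j : Fin (κ (i + 1))) :
    tanhNet κ n θ z (i + 1) j =
      if i + 2 ≤ n then Real.tanh ((∑ l, (θ ⟨i, h⟩).1 j l * tanhNet κ n θ z i l) + (θ ⟨i, h⟩).2 j)
      else (∑ l, (θ ⟨i, h⟩).1 j l * tanhNet κ n θ z i l) + (θ ⟨i, h⟩).2 j := by
  rw [tanhNet, dif_pos h]

lemma continuous_tanhNet (θ : NNParams κ n) :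
    ∀ i (j : Fin (κ i)), Continuous fun z => tanhNet κ n θ z i j
  | 0, j => continuous_apply j
  | i + 1, j => by
    by_cases h : i < n
    · simp only [tanhNet_succ θ _ h]
      have hpre := (continuous_finsetSum Finset.univ fun l _ =>
        (continuous_tanhNet θ i l).const_mul ((θ ⟨i, h⟩).1 j l)).add_const ((θ ⟨i, h⟩).2 j)
      split_ifs
      · exact Real.continuous_tanh.comp hpre
      · exact hpre
    · simp [tanhNet, h, continuous_const]

lemma measurable_tanhLoss (fhat : (Fin (κ 0) → ℝ) → (Fin (κ n) → ℝ)) (hfhat : Measurable fhat)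
    (θ : NNParams κ n) : Measurable (tanhLoss κ n fhat θ) :=
  Finset.measurable_sum _ fun j _ =>
    (((continuous_tanhNet θ n j).measurable.sub ((measurable_pi_apply j).comp hfhat))).pow_const 2

theorem dominatedWithDeriv_tanhNet (θ v : NNParams κ n) :
    ∀ i ≤ n, ∀ j : Fin (κ i), DominatedWithDeriv (fun z => 1 + ‖z‖)
      (fun t z => tanhNet κ n (θ + t • v) z i j)
  | 0, _, j => DominatedWithDeriv.of_abs_le fun z =>
      (norm_le_pi_norm z j).trans (le_add_of_nonneg_left zero_le_one)
  | i + 1, hi, j => by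
    have h : i < n := hi
    -- `((θ + t • v) ⟨i, h⟩).1 j l` is definitionally `(θ ⟨i, h⟩).1 j l + t * (v ⟨i, h⟩).1 j l`.
    have hpre : DominatedWithDeriv (fun z => 1 + ‖z‖) fun t z =>
        (∑ l, ((θ + t • v) ⟨i, h⟩).1 j l * tanhNet κ n (θ + t • v) z i l)
          + ((θ + t • v) ⟨i, h⟩).2 j :=
      (DominatedWithDeriv.sum _ fun l _ =>
        (DominatedWithDeriv.affine ((θ ⟨i, h⟩).1 j l) ((v ⟨i, h⟩).1 j l)).mul
          (dominatedWithDeriv_tanhNet θ v i h.le l)).add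
      ((DominatedWithDeriv.affine ((θ ⟨i, h⟩).2 j) ((v ⟨i, h⟩).2 j)).mono fun z =>
        le_add_of_nonneg_right (norm_nonneg z))
    simp only [tanhNet_succ _ _ h]
    split_ifs
    · exact hpre.tanh fun z => le_add_of_nonneg_right (norm_nonneg z)
    · exact hpre

end TanhNetwork

instance (d : ℕ) : IsProbabilityMeasure (stdGaussian d) := by
  unfold stdGaussian; infer_instance

theorem integrable_one_add_norm_sq_stdGaussian (d : ℕ) :
    Integrable (fun z : Fin d → ℝ => (1 + ‖z‖) ^ 2) (stdGaussian d) := by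
  have hid : MemLp id 2 (stdGaussian d) := memLp_pi_iff.2 fun i =>
    (ProbabilityTheory.memLp_id_gaussianReal 2).comp_measurePreserving (measurePreserving_eval _ i)
  have h : MemLp (fun z : Fin d → ℝ => 1 + ‖z‖) 2 (stdGaussian d) :=
    (memLp_const (1 : ℝ)).add hid.norm
  exact h.integrable_sq

section TanhLoss

variable {κ : ℕ → ℕ} {n : ℕ} (fhat : (Fin (κ 0) → ℝ) → (Fin (κ n) → ℝ))

theorem dominatedWithDeriv_tanhLoss (θ v : NNParams κ n) :
    DominatedWithDeriv (fun z => (1 + ‖z‖) ^ 2 + ∑ j, fhat z j ^ 2)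
      (fun t z => tanhLoss κ n fhat (θ + t • v) z) :=
  DominatedWithDeriv.sum _ fun j _ =>
    ((dominatedWithDeriv_tanhNet θ v n le_rfl j).sub_sq (fhat · j)).mono fun z =>
      add_le_add_right (Finset.single_le_sum (fun k _ => sq_nonneg (fhat z k))
        (Finset.mem_univ j)) _

theorem hasLineDerivAt_integral_tanhLoss (hfhat : Measurable fhat)
    (hmom0 : Integrable (fun z => ∑ j, (fhat z j) ^ 2) (stdGaussian (κ 0)))
    (θ v : NNParams κ n) :
    HasLineDerivAt ℝ (fun θ' => ∫ z, tanhLoss κ n fhat θ' z ∂(stdGaussian (κ 0)))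
      (∫ z, lineDeriv ℝ (fun θ' => tanhLoss κ n fhat θ' z) θ v ∂(stdGaussian (κ 0))) θ v :=
  (dominatedWithDeriv_tanhLoss fhat θ v).hasDerivAt_integral
    ((integrable_one_add_norm_sq_stdGaussian _).add hmom0)
    fun _ => (measurable_tanhLoss fhat hfhat _).aestronglyMeasurable

end TanhLoss

theorem stmt_7 (κ : ℕ → ℕ) (n : ℕ)
    (fhat : (Fin (κ 0) → ℝ) → (Fin (κ n) → ℝ)) (hfhat : Measurable fhat)
    (hmom0 : Integrable (fun z => ∑ j, (fhat z j) ^ 2) (stdGaussian (κ 0)))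
    (Θ : Set (NNParams κ n)) :
    ∀ θ ∈ Θ, ∀ i : Fin n,
      (∀ (j : Fin (κ (i.1 + 1))) (l : Fin (κ i.1)),
        HasLineDerivAt ℝ (fun θ' => ∫ z, tanhLoss κ n fhat θ' z ∂(stdGaussian (κ 0)))
          (∫ z, lineDeriv ℝ (fun θ' => tanhLoss κ n fhat θ' z) θ
              (Pi.single i (Pi.single j (Pi.single l 1), 0)) ∂(stdGaussian (κ 0)))
          θ (Pi.single i (Pi.single j (Pi.single l 1), 0))) ∧
      (∀ j : Fin (κ (i.1 + 1)),
        HasLineDerivAt ℝ (fun θ' => ∫ z, tanhLoss κ n fhat θ' z ∂(stdGaussian (κ 0)))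
          (∫ z, lineDeriv ℝ (fun θ' => tanhLoss κ n fhat θ' z) θ
              (Pi.single i (0, Pi.single j 1)) ∂(stdGaussian (κ 0)))
          θ (Pi.single i (0, Pi.single j 1))) :=
  fun θ _ _ => ⟨fun _ _ => hasLineDerivAt_integral_tanhLoss fhat hfhat hmom0 θ _,
    fun _ => hasLineDerivAt_integral_tanhLoss fhat hfhat hmom0 θ _⟩
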